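/- Let n ≥ 3 and consider the n-cycle with vertex set ℤ/nℤ and edge set E consisting of the n edges {i, i+1}. Let {a,b} and {c,d} be two chords whose four endpoints a, b, c, d are pairwise distinct, let P ⊆ E be the edge set of either one of the two arcs of the cycle joining a to b, and let Q ⊆ E be the edge set of either one of the two arcs joining c to d. Then the chords {a,b} and {c,d} interleave if and only if the four sets P ∩ Q, P \ Q, Q \ P and E \ (P ∪ Q) are all nonempty (and this holds simultaneously for all four choices of the arcs). -/
import Mathlib


/-- The edge set of the `n`-cycle on the vertex set `ZMod n`:
the `n` edges `{i, i+1}`. -/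
def cycleEdges (n : ℕ) : Set (Sym2 (ZMod n)) :=
  {e | ∃ i : ZMod n, e = s(i, i + 1)}

/-- The edge set of the arc of the `n`-cycle joining `a` to `b`,
traversed in the positive direction (the opposite arc is `arcEdges n b a`). -/
def arcEdges (n : ℕ) (a b : ZMod n) : Set (Sym2 (ZMod n)) :=
  {e | ∃ k : ℕ, k < (b - a).val ∧ e = s(a + (k : ZMod n), a + (k : ZMod n) + 1)}

/-- `x` lies on the open cyclic arc from `a` to `b` (positive direction). -/
def OnOpenArc (n : ℕ) (a b x : ZMod n) : Prop :=
  ∃ k : ℕ, 0 < k ∧ k < (b - a).val ∧ x = a + (k : ZMod n)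

/-- The chords `{a,b}` and `{c,d}` interleave: exactly one of `c`, `d` lies on the
open cyclic arc from `a` to `b`. -/
def Interleave (n : ℕ) (a b c d : ZMod n) : Prop :=
  (OnOpenArc n a b c ∧ ¬ OnOpenArc n a b d) ∨
    (OnOpenArc n a b d ∧ ¬ OnOpenArc n a b c)

namespace ChordAux

variable {n : ℕ}

lemma edge_inj (hn : 3 ≤ n) {i j : ZMod n} (h : s(i, i + 1) = s(j, j + 1)) : i = j := by
  rw [Sym2.eq_iff] at h
  rcases h with ⟨h1, _⟩ | ⟨h1, h2⟩
  · exact h1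
  · exfalso
    have h3 : (2 : ZMod n) = 0 := by linear_combination h2 - h1
    have h4 : ((2 : ℕ) : ZMod n) = 0 := by exact_mod_cast h3
    have h5 := (ZMod.natCast_eq_zero_iff 2 n).mp h4
    have := Nat.le_of_dvd (by norm_num) h5
    omega

lemma mem_arc [NeZero n] (a b : ZMod n) (e : Sym2 (ZMod n)) :
    e ∈ arcEdges n a b ↔ ∃ i : ZMod n, (i - a).val < (b - a).val ∧ e = s(i, i + 1) := by
  constructor
  · rintro ⟨k, hk, rfl⟩
    refine ⟨a + (k : ZMod n), ?_, rfl⟩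
    rwa [add_sub_cancel_left, ZMod.val_cast_of_lt (lt_trans hk (ZMod.val_lt _))]
  · rintro ⟨i, hi, rfl⟩
    refine ⟨(i - a).val, hi, ?_⟩
    have h : a + (((i - a).val : ℕ) : ZMod n) = i := by
      rw [ZMod.natCast_zmod_val]; ring
    rw [h]

lemma val_sub_eq [NeZero n] (z y : ZMod n) (hy : y ≠ 0) :
    (z - y).val = (z.val + (n - y.val)) % n := by
  rw [sub_eq_add_neg, ZMod.val_add, ZMod.neg_val, if_neg hy]

lemma mod_formula {x v : ℕ} (hn : 0 < n) (hx : x < n) (hv : v ≤ n) :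
    (x + (n - v)) % n = if x < v then x + n - v else x - v := by
  split
  · have h : x + (n - v) = x + n - v := by omega
    rw [h]; exact Nat.mod_eq_of_lt (by omega)
  · have h : x + (n - v) = (x - v) + n := by omega
    rw [h, Nat.add_mod_right]; exact Nat.mod_eq_of_lt (by omega)

lemma onOpenArc_iff [NeZero n] (a b x : ZMod n) :
    OnOpenArc n a b x ↔ 0 < (x - a).val ∧ (x - a).val < (b - a).val := by
  constructor
  · rintro ⟨k, hk0, hk, rfl⟩
    rw [add_sub_cancel_left, ZMod.val_cast_of_lt (lt_trans hk (ZMod.val_lt _))]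
    exact ⟨hk0, hk⟩
  · rintro ⟨h0, h1⟩
    exact ⟨(x - a).val, h0, h1, by rw [ZMod.natCast_zmod_val]; ring⟩

lemma exists_val [NeZero n] (a : ZMod n) (φ : ℕ → Prop) :
    (∃ i : ZMod n, φ (i - a).val) ↔ ∃ x, x < n ∧ φ x := by
  constructor
  · rintro ⟨i, hi⟩; exact ⟨(i - a).val, ZMod.val_lt _, hi⟩
  · rintro ⟨x, hx, hφ⟩
    refine ⟨a + (x : ZMod n), ?_⟩
    rwa [add_sub_cancel_left, ZMod.val_cast_of_lt hx]

lemma arc_compl [NeZero n] {a b : ZMod n} (hab : a ≠ b) (i : ZMod n) :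
    (i - b).val < (a - b).val ↔ ¬ (i - a).val < (b - a).val := by
  have hba : b - a ≠ 0 := sub_ne_zero.mpr (Ne.symm hab)
  have hn0 : 0 < n := Nat.pos_of_ne_zero (NeZero.ne n)
  have hu0 : 0 < (b - a).val := ZMod.val_pos.mpr hba
  have hx : (i - a).val < n := ZMod.val_lt _
  have hun : (b - a).val < n := ZMod.val_lt _
  have h1 : i - b = (i - a) - (b - a) := by ring
  have h2 : a - b = -(b - a) := by ring
  rw [h1, val_sub_eq _ _ hba, h2, ZMod.neg_val, if_neg hba,
    mod_formula hn0 hx (le_of_lt hun)]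
  split_ifs <;> omega

def conj4 (p q : ZMod n → Prop) : Prop :=
  (∃ i, p i ∧ q i) ∧ (∃ i, p i ∧ ¬ q i) ∧ (∃ i, ¬ p i ∧ q i) ∧ (∃ i, ¬ p i ∧ ¬ q i)

lemma conj4_not_left (p q : ZMod n → Prop) :
    conj4 (fun i => ¬ p i) q ↔ conj4 p q := by
  unfold conj4
  simp only [not_not]
  exact ⟨fun ⟨h1, h2, h3, h4⟩ => ⟨h3, h4, h1, h2⟩, fun ⟨h1, h2, h3, h4⟩ => ⟨h3, h4, h1, h2⟩⟩

lemma conj4_not_right (p q : ZMod n → Prop) :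
    conj4 p (fun i => ¬ q i) ↔ conj4 p q := by
  unfold conj4
  simp only [not_not]
  exact ⟨fun ⟨h1, h2, h3, h4⟩ => ⟨h2, h1, h4, h3⟩, fun ⟨h1, h2, h3, h4⟩ => ⟨h2, h1, h4, h3⟩⟩

lemma nonempty_iff_conj4 (hn : 3 ≤ n) (p q : ZMod n → Prop) (P Q : Set (Sym2 (ZMod n)))
    (hP : ∀ e, e ∈ P ↔ ∃ i, p i ∧ e = s(i, i + 1))
    (hQ : ∀ e, e ∈ Q ↔ ∃ i, q i ∧ e = s(i, i + 1)) :
    ((P ∩ Q).Nonempty ∧ (P \ Q).Nonempty ∧ (Q \ P).Nonempty ∧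
      (cycleEdges n \ (P ∪ Q)).Nonempty) ↔ conj4 p q := by
  constructor
  · rintro ⟨⟨e1, he1P, he1Q⟩, ⟨e2, he2P, he2Q⟩, ⟨e3, he3Q, he3P⟩, ⟨e4, he4E, he4⟩⟩
    obtain ⟨i1, hp1, rfl⟩ := (hP e1).mp he1P
    obtain ⟨j1, hq1, hj1⟩ := (hQ _).mp he1Q
    obtain ⟨i2, hp2, rfl⟩ := (hP e2).mp he2P
    obtain ⟨i3, hq3, rfl⟩ := (hQ e3).mp he3Q
    obtain ⟨i4, rfl⟩ := he4E
    refine ⟨⟨i1, hp1, ?_⟩, ⟨i2, hp2, fun h => he2Q ((hQ _).mpr ⟨i2, h, rfl⟩)⟩,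
      ⟨i3, fun h => he3P ((hP _).mpr ⟨i3, h, rfl⟩), hq3⟩,
      ⟨i4, fun h => he4 (Or.inl ((hP _).mpr ⟨i4, h, rfl⟩)),
        fun h => he4 (Or.inr ((hQ _).mpr ⟨i4, h, rfl⟩))⟩⟩
    rwa [edge_inj hn hj1]
  · rintro ⟨⟨i1, hp1, hq1⟩, ⟨i2, hp2, hq2⟩, ⟨i3, hp3, hq3⟩, ⟨i4, hp4, hq4⟩⟩
    refine ⟨⟨s(i1, i1 + 1), (hP _).mpr ⟨i1, hp1, rfl⟩, (hQ _).mpr ⟨i1, hq1, rfl⟩⟩,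
      ⟨s(i2, i2 + 1), (hP _).mpr ⟨i2, hp2, rfl⟩, fun h => ?_⟩,
      ⟨s(i3, i3 + 1), (hQ _).mpr ⟨i3, hq3, rfl⟩, fun h => ?_⟩,
      ⟨s(i4, i4 + 1), ⟨i4, rfl⟩, fun h => ?_⟩⟩
    · obtain ⟨j, hqj, hj⟩ := (hQ _).mp h
      exact hq2 (by rwa [edge_inj hn hj])
    · obtain ⟨j, hpj, hj⟩ := (hP _).mp h
      exact hp3 (by rwa [edge_inj hn hj])
    · rcases h with h | h
      · obtain ⟨j, hpj, hj⟩ := (hP _).mp h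
        exact hp4 (by rwa [edge_inj hn hj])
      · obtain ⟨j, hqj, hj⟩ := (hQ _).mp h
        exact hq4 (by rwa [edge_inj hn hj])

lemma core (hn : 3 ≤ n) {u v w : ℕ}
    (hu0 : 0 < u) (hun : u < n) (hv0 : 0 < v) (hvn : v < n) (hw0 : 0 < w) (hwn : w < n)
    (huv : u ≠ v) (huw : u ≠ w) (hvw : v ≠ w) :
    ((v < u ∧ ¬ w < u) ∨ (w < u ∧ ¬ v < u)) ↔
      ((∃ x, x < n ∧ (x < u ∧ (x + (n - v)) % n < (w + (n - v)) % n)) ∧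
       (∃ x, x < n ∧ (x < u ∧ ¬ (x + (n - v)) % n < (w + (n - v)) % n)) ∧
       (∃ x, x < n ∧ (¬ x < u ∧ (x + (n - v)) % n < (w + (n - v)) % n)) ∧
       (∃ x, x < n ∧ (¬ x < u ∧ ¬ (x + (n - v)) % n < (w + (n - v)) % n))) := by
  have hn0 : 0 < n := by omega
  have hmod : ∀ x, x < n → (x + (n - v)) % n = if x < v then x + n - v else x - v :=
    fun x hx => mod_formula hn0 hx (le_of_lt hvn)
  constructor
  · rintro (⟨h1, h2⟩ | ⟨h1, h2⟩)
    · refine ⟨⟨v, hvn, by omega, ?_⟩, ⟨0, by omega, by omega, ?_⟩,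
        ⟨u, hun, by omega, ?_⟩, ⟨w, hwn, by omega, ?_⟩⟩
      · rw [hmod v hvn, hmod w hwn]; split_ifs <;> omega
      · rw [hmod 0 (by omega), hmod w hwn]; split_ifs <;> omega
      · rw [hmod u hun, hmod w hwn]; split_ifs <;> omega
      · exact lt_irrefl _
    · refine ⟨⟨0, by omega, by omega, ?_⟩, ⟨w, hwn, by omega, ?_⟩,
        ⟨v, hvn, by omega, ?_⟩, ⟨u, hun, by omega, ?_⟩⟩
      · rw [hmod 0 (by omega), hmod w hwn]; split_ifs <;> omega
      · exact lt_irrefl _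
      · rw [hmod v hvn, hmod w hwn]; split_ifs <;> omega
      · rw [hmod u hun, hmod w hwn]; split_ifs <;> omega
  · rintro ⟨⟨x1, hx1n, hx1u, hx1b⟩, ⟨x2, hx2n, hx2u, hx2b⟩,
      ⟨x3, hx3n, hx3u, hx3b⟩, ⟨x4, hx4n, hx4u, hx4b⟩⟩
    rw [hmod x1 hx1n, hmod w hwn] at hx1b
    rw [hmod x2 hx2n, hmod w hwn] at hx2b
    rw [hmod x3 hx3n, hmod w hwn] at hx3b
    rw [hmod x4 hx4n, hmod w hwn] at hx4b
    split_ifs at hx1b hx2b hx3b hx4b <;> omega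

end ChordAux

/-- Two chords of the `n`-cycle (`n ≥ 3`) with pairwise distinct endpoints interleave
iff for (each) choice `P` of an arc joining `a` to `b` and (each) choice `Q` of an arc
joining `c` to `d`, the four sets `P ∩ Q`, `P \ Q`, `Q \ P` and `E \ (P ∪ Q)` are all
nonempty. -/
theorem interleave_iff_four_nonempty (n : ℕ) (hn : 3 ≤ n) (a b c d : ZMod n)
    (hab : a ≠ b) (hac : a ≠ c) (had : a ≠ d) (hbc : b ≠ c) (hbd : b ≠ d) (hcd : c ≠ d)
    (P Q : Set (Sym2 (ZMod n)))
    (hP : P = arcEdges n a b ∨ P = arcEdges n b a)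
    (hQ : Q = arcEdges n c d ∨ Q = arcEdges n d c) :
    Interleave n a b c d ↔
      ((P ∩ Q).Nonempty ∧ (P \ Q).Nonempty ∧ (Q \ P).Nonempty ∧
        (cycleEdges n \ (P ∪ Q)).Nonempty) := by
  haveI : NeZero n := ⟨by omega⟩
  have hba : b - a ≠ 0 := sub_ne_zero.mpr (Ne.symm hab)
  have hca : c - a ≠ 0 := sub_ne_zero.mpr (Ne.symm hac)
  have hda : d - a ≠ 0 := sub_ne_zero.mpr (Ne.symm had)
  have hu0 : 0 < (b - a).val := ZMod.val_pos.mpr hba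
  have hv0 : 0 < (c - a).val := ZMod.val_pos.mpr hca
  have hw0 : 0 < (d - a).val := ZMod.val_pos.mpr hda
  have hun : (b - a).val < n := ZMod.val_lt _
  have hvn : (c - a).val < n := ZMod.val_lt _
  have hwn : (d - a).val < n := ZMod.val_lt _
  have huv : (b - a).val ≠ (c - a).val := fun h => hbc (sub_left_inj.mp (ZMod.val_injective n h))
  have huw : (b - a).val ≠ (d - a).val := fun h => hbd (sub_left_inj.mp (ZMod.val_injective n h))
  have hvw : (c - a).val ≠ (d - a).val := fun h => hcd (sub_left_inj.mp (ZMod.val_injective n h))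
  -- reformulate Interleave
  have hIL : Interleave n a b c d ↔
      (((c - a).val < (b - a).val ∧ ¬ (d - a).val < (b - a).val) ∨
        ((d - a).val < (b - a).val ∧ ¬ (c - a).val < (b - a).val)) := by
    unfold Interleave
    rw [ChordAux.onOpenArc_iff, ChordAux.onOpenArc_iff]
    omega
  -- the main equivalence for the canonical choice of predicates
  have hmain : Interleave n a b c d ↔
      ChordAux.conj4 (fun i => (i - a).val < (b - a).val)
        (fun i => (i - c).val < (d - c).val) := by
    have h1 : ∀ i : ZMod n, (i - c).val = ((i - a).val + (n - (c - a).val)) % n := by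
      intro i
      have h : i - c = (i - a) - (c - a) := by ring
      rw [h, ChordAux.val_sub_eq _ _ hca]
    rw [hIL, ChordAux.core hn hu0 hun hv0 hvn hw0 hwn huv huw hvw]
    unfold ChordAux.conj4
    simp only [h1]
    exact and_congr
      ((ChordAux.exists_val a (fun x => x < (b - a).val ∧
        (x + (n - (c - a).val)) % n < ((d - a).val + (n - (c - a).val)) % n)).symm)
      (and_congr
        ((ChordAux.exists_val a (fun x => x < (b - a).val ∧
          ¬ (x + (n - (c - a).val)) % n < ((d - a).val + (n - (c - a).val)) % n)).symm)
        (and_congr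
          ((ChordAux.exists_val a (fun x => ¬ x < (b - a).val ∧
            (x + (n - (c - a).val)) % n < ((d - a).val + (n - (c - a).val)) % n)).symm)
          ((ChordAux.exists_val a (fun x => ¬ x < (b - a).val ∧
            ¬ (x + (n - (c - a).val)) % n < ((d - a).val + (n - (c - a).val)) % n)).symm)))
  -- membership characterizations for P and Q
  have hmemP : (∀ e, e ∈ P ↔ ∃ i, ((i - a).val < (b - a).val) ∧ e = s(i, i + 1)) ∨
      (∀ e, e ∈ P ↔ ∃ i, (¬ (i - a).val < (b - a).val) ∧ e = s(i, i + 1)) := by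
    rcases hP with rfl | rfl
    · exact Or.inl (ChordAux.mem_arc a b)
    · refine Or.inr fun e => ?_
      rw [ChordAux.mem_arc]
      exact exists_congr fun i => and_congr_left' (ChordAux.arc_compl hab i)
  have hmemQ : (∀ e, e ∈ Q ↔ ∃ i, ((i - c).val < (d - c).val) ∧ e = s(i, i + 1)) ∨
      (∀ e, e ∈ Q ↔ ∃ i, (¬ (i - c).val < (d - c).val) ∧ e = s(i, i + 1)) := by
    rcases hQ with rfl | rfl
    · exact Or.inl (ChordAux.mem_arc c d)
    · refine Or.inr fun e => ?_
      rw [ChordAux.mem_arc]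
      exact exists_congr fun i => and_congr_left' (ChordAux.arc_compl hcd i)
  rcases hmemP with hP' | hP' <;> rcases hmemQ with hQ' | hQ' <;>
    rw [ChordAux.nonempty_iff_conj4 hn _ _ P Q hP' hQ']
  · exact hmain
  · rw [ChordAux.conj4_not_right]; exact hmain
  · rw [ChordAux.conj4_not_left]; exact hmain
  · rw [ChordAux.conj4_not_left, ChordAux.conj4_not_right]; exact hmain
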